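/- Let 𝒯 be a countable family of triangles in ℝ² such that for any two distinct members T, T' of 𝒯, T' is not an image of T under a map of the form z ↦ s·z + t with s ∈ {1, −1}, t ∈ ℝ² (i.e., T ≄ T'). Then there exists a sequence (δₙ)ₙ≥₁ of real numbers such that: (a) |δₙ| < 1 for all n; (b) for each n, no two distinct members of the sheared family M_{δₙ}(𝒯) = { M_{δₙ}(T) : T ∈ 𝒯 } are congruent; and (c) for all n ≠ n' and all T, T' ∈ 𝒯, the triangles M_{δₙ}(T) and M_{δ_{n'}}(T') are not congruent. -/

import Mathlib

open MeasureTheory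

noncomputable section

/-- The Euclidean plane. -/
abbrev Plane : Type := EuclideanSpace ℝ (Fin 2)

/-- A triangle is the convex hull of three affinely independent points. -/
def IsTriangle (T : Set Plane) : Prop :=
  ∃ p q r : Plane, AffineIndependent ℝ ![p, q, r] ∧ T = convexHull ℝ {p, q, r}

/-- Two subsets of the plane are congruent if one is the image of the other under
an isometry of the plane (reflections allowed). -/
def PlaneCongruent (A B : Set Plane) : Prop :=
  ∃ f : Plane ≃ᵢ Plane, f '' A = B

/-- A tiling of `A ⊆ ℝ²`: a countable collection of compact sets whose interiors are
pairwise disjoint and whose union is `A`. -/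
def IsTilingOf (𝒯 : Set (Set Plane)) (A : Set Plane) : Prop :=
  𝒯.Countable ∧ (∀ T ∈ 𝒯, IsCompact T) ∧
    (∀ T ∈ 𝒯, ∀ T' ∈ 𝒯, T ≠ T' → interior T ∩ interior T' = ∅) ∧
    ⋃₀ 𝒯 = A

/-- A vertex of a (convex polygonal) tile is an extreme point of it. -/
def IsVertexOf (p : Plane) (T : Set Plane) : Prop := p ∈ Set.extremePoints ℝ T

/-- An edge of a convex polygon: a nondegenerate segment between two vertices that
lies in the frontier of the polygon. -/
def IsEdgeOf (e : Set Plane) (T : Set Plane) : Prop :=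
  ∃ u v : Plane, u ≠ v ∧ IsVertexOf u T ∧ IsVertexOf v T ∧
    e = segment ℝ u v ∧ e ⊆ frontier T

/-- A tiling by convex polygons is vertex-to-vertex if the intersection of any two
distinct tiles is empty, a common vertex, or a common entire edge. -/
def IsVertexToVertex (𝒯 : Set (Set Plane)) : Prop :=
  ∀ T ∈ 𝒯, ∀ T' ∈ 𝒯, T ≠ T' →
    T ∩ T' = ∅ ∨
    (∃ p : Plane, T ∩ T' = {p} ∧ IsVertexOf p T ∧ IsVertexOf p T') ∨
    (IsEdgeOf (T ∩ T') T ∧ IsEdgeOf (T ∩ T') T')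

/-- A convex polygon with exactly `n` vertices: a compact convex set whose set of
extreme points is finite with exactly `n` elements. -/
def IsConvexPolygon (n : ℕ) (T : Set Plane) : Prop :=
  IsCompact T ∧ Convex ℝ T ∧ (Set.extremePoints ℝ T).Finite ∧
    (Set.extremePoints ℝ T).ncard = n

/-- `A ≃ B`: `B` is the image of `A` under `z ↦ s·z + t` with `s ∈ {1, -1}`. -/
def TransCong (A B : Set Plane) : Prop :=
  ∃ s : ℝ, (s = 1 ∨ s = -1) ∧ ∃ t : Plane, B = (fun z => s • z + t) '' A

/-- The shear map `M_δ (x, y) = (x + δy, y)`. -/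
def shear (δ : ℝ) (p : Plane) : Plane :=
  (WithLp.equiv 2 (Fin 2 → ℝ)).symm ![p 0 + δ * p 1, p 1]

namespace St18


lemma plane_ext {x y : Plane} (h0 : x 0 = y 0) (h1 : x 1 = y 1) : x = y := by
  apply PiLp.ext; intro i; fin_cases i <;> assumption

@[simp] lemma add_apply (x y : Plane) (i : Fin 2) : (x + y) i = x i + y i := rfl
@[simp] lemma sub_apply (x y : Plane) (i : Fin 2) : (x - y) i = x i - y i := rfl
@[simp] lemma smul_apply (s : ℝ) (x : Plane) (i : Fin 2) : (s • x) i = s * x i := rfl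
@[simp] lemma neg_apply (x : Plane) (i : Fin 2) : (-x) i = - x i := rfl

@[simp] lemma shear_apply0 (δ : ℝ) (p : Plane) : shear δ p 0 = p 0 + δ * p 1 := by simp [shear]
@[simp] lemma shear_apply1 (δ : ℝ) (p : Plane) : shear δ p 1 = p 1 := by simp [shear]

/-- determinant of the triangle -/
def detv (p q r : Plane) : ℝ :=
  (q 0 - p 0) * (r 1 - p 1) - (q 1 - p 1) * (r 0 - p 0)

lemma detv_ne_of_affineIndependent {p q r : Plane}
    (h : AffineIndependent ℝ ![p, q, r]) : detv p q r ≠ 0 := by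
  intro hd
  rw [affineIndependent_iff_not_collinear_set] at h
  apply h
  rw [collinear_iff_of_mem (Set.mem_insert p _)]
  by_cases hu : q - p = 0
  · refine ⟨r - p, ?_⟩
    rintro x hx
    have hqp : q = p := by rwa [sub_eq_zero] at hu
    rcases hx with hx | hx | hx
    · exact ⟨0, by simp [hx]⟩
    · exact ⟨0, by simp [hx, hqp]⟩
    · exact ⟨1, by simp [Set.eq_of_mem_singleton hx]⟩
  · refine ⟨q - p, ?_⟩
    rintro x hx
    have h0 : q 0 - p 0 ≠ 0 ∨ q 1 - p 1 ≠ 0 := by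
      by_contra hc
      push_neg at hc
      exact hu (plane_ext (by simpa using hc.1) (by simpa using hc.2))
    rcases hx with hx | hx | hx
    · exact ⟨0, by simp [hx]⟩
    · exact ⟨1, by simp [hx]⟩
    · rw [Set.eq_of_mem_singleton hx]
      unfold detv at hd
      rcases h0 with h0 | h0
      · refine ⟨(r 0 - p 0) / (q 0 - p 0), plane_ext ?_ ?_⟩
        · simp only [vadd_eq_add, add_apply, smul_apply, sub_apply]
          field_simp
          ring
        · simp only [vadd_eq_add, add_apply, smul_apply, sub_apply]
          field_simp
          nlinarith [hd]
      · refine ⟨(r 1 - p 1) / (q 1 - p 1), plane_ext ?_ ?_⟩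
        · simp only [vadd_eq_add, add_apply, smul_apply, sub_apply]
          field_simp
          nlinarith [hd]
        · simp only [vadd_eq_add, add_apply, smul_apply, sub_apply]
          field_simp
          ring


lemma quad_zero {a b c : ℝ} (h : {x : ℝ | a * x^2 + b * x + c = 0}.Infinite) :
    a = 0 ∧ b = 0 ∧ c = 0 := by
  set S := {x : ℝ | a * x^2 + b * x + c = 0} with hS
  obtain ⟨x, hx⟩ := h.nonempty
  obtain ⟨y, hy, hxy⟩ := (h.diff (Set.finite_singleton x)).nonempty
  obtain ⟨z, hz, hz2⟩ := (h.diff ((Set.finite_singleton y).insert x)).nonempty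
  simp only [Set.mem_insert_iff, Set.mem_singleton_iff] at hxy hz2
  push_neg at hz2
  have hx' : a * x^2 + b * x + c = 0 := hx
  have hy' : a * y^2 + b * y + c = 0 := hy
  have hz' : a * z^2 + b * z + c = 0 := hz
  have k1 : (x - y) * (a * (x + y) + b) = 0 := by linear_combination hx' - hy'
  have k2 : (x - z) * (a * (x + z) + b) = 0 := by linear_combination hx' - hz'
  have e1 : a * (x + y) + b = 0 :=
    (mul_eq_zero.mp k1).resolve_left (sub_ne_zero.mpr (Ne.symm hxy))
  have e2 : a * (x + z) + b = 0 :=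
    (mul_eq_zero.mp k2).resolve_left (sub_ne_zero.mpr (Ne.symm hz2.1))
  have k3 : a * (y - z) = 0 := by linear_combination e1 - e2
  have ha : a = 0 := (mul_eq_zero.mp k3).resolve_right (sub_ne_zero.mpr (Ne.symm hz2.2))
  have hb : b = 0 := by linear_combination e1 - (x + y) * ha
  exact ⟨ha, hb, by linear_combination hx' - (x^2) * ha - x * hb⟩

lemma quad_finite {a b c : ℝ} (h : ¬ (a = 0 ∧ b = 0 ∧ c = 0)) :
    {x : ℝ | a * x^2 + b * x + c = 0}.Finite := by
  by_contra hf
  exact h (quad_zero hf)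



lemma mem_hull_triple {p q r x : Plane} (hx : x ∈ convexHull ℝ ({p, q, r} : Set Plane)) :
    ∃ a b c : ℝ, 0 ≤ a ∧ 0 ≤ b ∧ 0 ≤ c ∧ a + b + c = 1 ∧ x = a • p + b • q + c • r := by
  rw [convexHull_insert (by simp : ({q, r} : Set Plane).Nonempty), convexHull_pair] at hx
  rw [mem_convexJoin] at hx
  obtain ⟨p', hp', z, hz, hxz⟩ := hx
  rw [Set.mem_singleton_iff] at hp'
  subst hp'
  obtain ⟨s, t, hs, ht, hst, rfl⟩ := hz
  obtain ⟨a, v, ha, hv, hav, rfl⟩ := hxz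
  refine ⟨a, v * s, v * t, ha, by positivity, by positivity, by nlinarith, ?_⟩
  module

lemma extreme_vertex {p q r : Plane} (hd : detv p q r ≠ 0) :
    p ∈ Set.extremePoints ℝ (convexHull ℝ ({p, q, r} : Set Plane)) := by
  set u0 := q 0 - p 0 with hu0
  set u1 := q 1 - p 1 with hu1
  set v0 := r 0 - p 0 with hv0
  set v1 := r 1 - p 1 with hv1
  have hD : u0 * v1 - u1 * v0 ≠ 0 := hd
  set D := u0 * v1 - u1 * v0 with hDdef
  set φ : Plane → ℝ := fun x =>
    1 - (v1 - u1) / D * (x 0 - p 0) - (u0 - v0) / D * (x 1 - p 1) with hφ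
  have key : ∀ x ∈ convexHull ℝ ({p, q, r} : Set Plane), φ x ≤ 1 ∧ (φ x = 1 → x = p) := by
    intro x hx
    obtain ⟨a, b, c, ha, hb, hc, habc, hrep⟩ := mem_hull_triple hx
    have hx0 : x 0 = a * p 0 + b * q 0 + c * r 0 := by rw [hrep]; simp
    have hx1 : x 1 = a * p 1 + b * q 1 + c * r 1 := by rw [hrep]; simp
    have hφx : φ x = a := by
      have haa : a = 1 - b - c := by linarith
      simp only [hφ, hx0, hx1]
      field_simp
      rw [haa]
      simp only [hu0, hu1, hv0, hv1, hDdef]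
      ring
    constructor
    · rw [hφx]; linarith
    · intro h1
      rw [hφx] at h1
      have hb0 : b = 0 := by linarith
      have hc0 : c = 0 := by linarith
      rw [hrep, hb0, hc0, h1]
      simp
  have hpmem : p ∈ convexHull ℝ ({p, q, r} : Set Plane) :=
    subset_convexHull ℝ _ (Set.mem_insert _ _)
  rw [mem_extremePoints]
  refine ⟨hpmem, fun x₁ hx₁ x₂ hx₂ hseg => ?_⟩
  obtain ⟨a, b, ha, hb, hab, hsum⟩ := hseg
  have hφp : φ p = 1 := by simp [hφ]
  have hφsum : a * φ x₁ + b * φ x₂ = 1 := by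
    have e : φ (a • x₁ + b • x₂) = a * φ x₁ + b * φ x₂ := by
      simp only [hφ, add_apply, smul_apply]
      linear_combination (-(1 + (v1 - u1) / D * p 0 + (u0 - v0) / D * p 1)) * hab
    rw [hsum, hφp] at e
    linarith [e]
  have h1 := key x₁ hx₁
  have h2 := key x₂ hx₂
  have e1 : φ x₁ = 1 := by nlinarith [h1.1, h2.1]
  have e2 : φ x₂ = 1 := by nlinarith [h1.1, h2.1]
  exact ⟨h1.2 e1, h2.2 e2⟩

lemma vertices_eq {p q r : Plane} (hd : detv p q r ≠ 0) :
    Set.extremePoints ℝ (convexHull ℝ ({p, q, r} : Set Plane)) = {p, q, r} := by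
  apply Set.Subset.antisymm extremePoints_convexHull_subset
  have hq : detv q r p ≠ 0 := by
    intro h; apply hd; unfold detv at *; linarith [h]
  have hr : detv r p q ≠ 0 := by
    intro h; apply hd; unfold detv at *; linarith [h]
  have e1 : ({p, q, r} : Set Plane) = {q, r, p} := by
    ext x; simp only [Set.mem_insert_iff, Set.mem_singleton_iff]; tauto
  have e2 : ({p, q, r} : Set Plane) = {r, p, q} := by
    ext x; simp only [Set.mem_insert_iff, Set.mem_singleton_iff]; tauto
  rintro x (rfl | rfl | hx)
  · exact extreme_vertex hd
  · rw [e1]; exact extreme_vertex hq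
  · rw [Set.eq_of_mem_singleton hx, e2]; exact extreme_vertex hr



/-- squared distance -/
def sqd (x y : Plane) : ℝ := (x 0 - y 0)^2 + (x 1 - y 1)^2

lemma sqd_eq_dist (x y : Plane) : sqd x y = dist x y ^ 2 := by
  rw [EuclideanSpace.dist_eq, Real.sq_sqrt (by positivity)]
  simp [sqd, Fin.sum_univ_two, Real.dist_eq, sq_abs]

lemma sqd_comm (x y : Plane) : sqd x y = sqd y x := by
  simp only [sqd]; ring

lemma sqd_isometry (f : Plane ≃ᵢ Plane) (x y : Plane) : sqd (f x) (f y) = sqd x y := by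
  rw [sqd_eq_dist, sqd_eq_dist, f.dist_eq]

/-- the multiset of squared side lengths -/
def msqv (p q r : Plane) : Multiset ℝ := {sqd p q, sqd q r, sqd r p}

lemma mrot (a b c : ℝ) : ({a, b, c} : Multiset ℝ) = {b, c, a} := by
  change a ::ₘ b ::ₘ c ::ₘ 0 = b ::ₘ c ::ₘ a ::ₘ 0
  rw [Multiset.cons_swap a b, Multiset.cons_swap a c]

lemma mswap23 (a b c : ℝ) : ({a, b, c} : Multiset ℝ) = {a, c, b} := by
  change a ::ₘ b ::ₘ c ::ₘ 0 = a ::ₘ c ::ₘ b ::ₘ 0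
  rw [Multiset.cons_swap b c]

lemma msqv_rot (p q r : Plane) : msqv p q r = msqv q r p := mrot _ _ _

lemma msqv_swap (p q r : Plane) : msqv p q r = msqv q p r := by
  simp only [msqv, sqd_comm q p, sqd_comm p r, sqd_comm r q]
  exact mswap23 _ _ _

lemma msqv_isometry (f : Plane ≃ᵢ Plane) (p q r : Plane) :
    msqv (f p) (f q) (f r) = msqv p q r := by
  simp [msqv, sqd_isometry]

lemma detv_ne_pairwise {p q r : Plane} (hd : detv p q r ≠ 0) :
    p ≠ q ∧ p ≠ r ∧ q ≠ r := by
  refine ⟨?_, ?_, ?_⟩ <;> intro h <;> apply hd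
  · rw [h]; simp only [detv]; ring
  · rw [h]; simp only [detv]; ring
  · rw [h]; simp only [detv]; ring

lemma match_msqv (f : Plane ≃ᵢ Plane) {p q r p' q' r' : Plane}
    (hd : detv p q r ≠ 0)
    (him : ⇑f '' ({p, q, r} : Set Plane) = ({p', q', r'} : Set Plane)) :
    msqv p q r = msqv p' q' r' := by
  obtain ⟨hpq, hpr, hqr⟩ := detv_ne_pairwise hd
  have h1 : f p ∈ ({p', q', r'} : Set Plane) := him ▸ Set.mem_image_of_mem _ (by simp)
  have h2 : f q ∈ ({p', q', r'} : Set Plane) := him ▸ Set.mem_image_of_mem _ (by simp)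
  have h3 : f r ∈ ({p', q', r'} : Set Plane) := him ▸ Set.mem_image_of_mem _ (by simp)
  simp only [Set.mem_insert_iff, Set.mem_singleton_iff] at h1 h2 h3
  have e := msqv_isometry f p q r
  rcases h1 with h1 | h1 | h1 <;> rcases h2 with h2 | h2 | h2 <;> rcases h3 with h3 | h3 | h3 <;>
    first
      | exact absurd (f.injective (h1.trans h2.symm)) hpq
      | exact absurd (f.injective (h1.trans h3.symm)) hpr
      | exact absurd (f.injective (h2.trans h3.symm)) hqr
      | (rw [← e, h1, h2, h3]
         try first
           | exact msqv_rot _ _ _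
           | exact (msqv_rot _ _ _).symm
           | exact msqv_swap _ _ _
           | exact (msqv_rot _ _ _).trans (msqv_swap _ _ _)
           | exact (msqv_swap _ _ _).trans (msqv_rot _ _ _))



lemma extremePoints_translate (t : Plane) (A : Set Plane) :
    Set.extremePoints ℝ ((fun x => x + t) '' A) = (fun x => x + t) '' Set.extremePoints ℝ A := by
  ext y
  simp only [mem_extremePoints, Set.mem_image]
  constructor
  · rintro ⟨⟨x, hx, rfl⟩, h⟩
    refine ⟨x, ⟨hx, fun x₁ hx₁ x₂ hx₂ hseg => ?_⟩, rfl⟩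
    have hmem : x + t ∈ openSegment ℝ (x₁ + t) (x₂ + t) := by
      rw [add_comm x₁ t, add_comm x₂ t, add_comm x t]
      exact (mem_openSegment_translate ℝ t).mpr hseg
    obtain ⟨e1, e2⟩ := h (x₁ + t) ⟨x₁, hx₁, rfl⟩ (x₂ + t) ⟨x₂, hx₂, rfl⟩ hmem
    exact ⟨add_left_injective t e1, add_left_injective t e2⟩
  · rintro ⟨x, ⟨hx, h⟩, rfl⟩
    refine ⟨⟨x, hx, rfl⟩, ?_⟩
    rintro y₁ ⟨x₁, hx₁, rfl⟩ y₂ ⟨x₂, hx₂, rfl⟩ hseg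
    have hseg' : x ∈ openSegment ℝ x₁ x₂ := by
      apply (mem_openSegment_translate ℝ t).mp
      rw [add_comm t x₁, add_comm t x₂, add_comm t x]
      exact hseg
    obtain ⟨e1, e2⟩ := h x₁ hx₁ x₂ hx₂ hseg'
    rw [e1, e2]
    exact ⟨rfl, rfl⟩




lemma cong_msqv {p q r p' q' r' : Plane} (hd : detv p q r ≠ 0) (hd' : detv p' q' r' ≠ 0)
    (hcong : PlaneCongruent (convexHull ℝ ({p, q, r} : Set Plane)) (convexHull ℝ ({p', q', r'} : Set Plane))) :
    msqv p q r = msqv p' q' r' := by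
  obtain ⟨f, hf⟩ := hcong
  have hfe : ⇑f = (fun x => x + f 0) ∘ ⇑f.toRealLinearIsometryEquiv := by
    funext x
    simp [IsometryEquiv.toRealLinearIsometryEquiv_apply]
  have h1 : Set.extremePoints ℝ (⇑f '' convexHull ℝ ({p, q, r} : Set Plane))
      = ⇑f '' Set.extremePoints ℝ (convexHull ℝ ({p, q, r} : Set Plane)) := by
    rw [hfe, Set.image_comp, Set.image_comp, extremePoints_translate,
      image_extremePoints]
  have him : ⇑f '' ({p, q, r} : Set Plane) = ({p', q', r'} : Set Plane) := by
    rw [← vertices_eq hd, ← h1, hf, vertices_eq hd']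
  exact match_msqv f hd him

def shearL (δ : ℝ) : Plane →ₗ[ℝ] Plane where
  toFun := shear δ
  map_add' x y := plane_ext (by simp; ring) (by simp)
  map_smul' s x := plane_ext (by simp; ring) (by simp)

lemma shear_image_hull (δ : ℝ) (p q r : Plane) :
    shear δ '' (convexHull ℝ ({p, q, r} : Set Plane))
      = convexHull ℝ ({shear δ p, shear δ q, shear δ r} : Set Plane) := by
  have h : shear δ '' ({p, q, r} : Set Plane) = {shear δ p, shear δ q, shear δ r} := by
    simp only [Set.image_insert_eq, Set.image_singleton]
  rw [show shear δ = ⇑(shearL δ) from rfl, (shearL δ).image_convexHull,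
    show ⇑(shearL δ) = shear δ from rfl, h]

lemma detv_shear (δ : ℝ) (p q r : Plane) :
    detv (shear δ p) (shear δ q) (shear δ r) = detv p q r := by
  simp only [detv, shear_apply0, shear_apply1]; ring

/-- squared side lengths of the sheared triangle -/
def msq3 (δ : ℝ) (p q r : Plane) : Multiset ℝ := msqv (shear δ p) (shear δ q) (shear δ r)

lemma cong_shear_msq3 {p q r p' q' r' : Plane} (hd : detv p q r ≠ 0) (hd' : detv p' q' r' ≠ 0)
    {δ δ' : ℝ}
    (h : PlaneCongruent (shear δ '' convexHull ℝ ({p, q, r} : Set Plane))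
          (shear δ' '' convexHull ℝ ({p', q', r'} : Set Plane))) :
    msq3 δ p q r = msq3 δ' p' q' r' := by
  rw [shear_image_hull, shear_image_hull] at h
  exact cong_msqv (by rw [detv_shear]; exact hd) (by rw [detv_shear]; exact hd') h

lemma sqd_shear_quad (δ : ℝ) (x y : Plane) :
    sqd (shear δ x) (shear δ y) =
      (x 1 - y 1)^2 * δ^2 + (2*(x 0 - y 0)*(x 1 - y 1)) * δ + ((x 0 - y 0)^2 + (x 1 - y 1)^2) := by
  simp only [sqd, shear_apply0, shear_apply1]; ring



lemma mem_msq3_1 (δ : ℝ) (p q r : Plane) : sqd (shear δ p) (shear δ q) ∈ msq3 δ p q r := by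
  simp [msq3, msqv]

lemma mem_msq3_2 (δ : ℝ) (p q r : Plane) : sqd (shear δ q) (shear δ r) ∈ msq3 δ p q r := by
  simp [msq3, msqv]

lemma mem_msq3_3 (δ : ℝ) (p q r : Plane) : sqd (shear δ r) (shear δ p) ∈ msq3 δ p q r := by
  simp [msq3, msqv]

lemma mem_msq3_iff {δ : ℝ} {p q r : Plane} {v : ℝ} :
    v ∈ msq3 δ p q r ↔ v = sqd (shear δ p) (shear δ q) ∨ v = sqd (shear δ q) (shear δ r)
      ∨ v = sqd (shear δ r) (shear δ p) := by
  simp [msq3, msqv]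

/-- the set of shear parameters where one fixed edge attains a fixed squared length -/
lemma edge_value_finite {x y : Plane} (hb : x 1 - y 1 ≠ 0) (c : ℝ) :
    {δ : ℝ | sqd (shear δ x) (shear δ y) = c}.Finite := by
  have : {δ : ℝ | sqd (shear δ x) (shear δ y) = c} =
      {δ : ℝ | (x 1 - y 1)^2 * δ^2 + (2*(x 0 - y 0)*(x 1 - y 1)) * δ
        + ((x 0 - y 0)^2 + (x 1 - y 1)^2 - c) = 0} := by
    ext δ
    simp only [Set.mem_setOf_eq, sqd_shear_quad]
    constructor <;> intro h <;> linarith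
  rw [this]
  exact quad_finite (by
    rintro ⟨h1, -, -⟩
    exact hb (pow_eq_zero_iff (n := 2) (by norm_num) |>.mp h1))

lemma sep2 {p q r : Plane} (hd : detv p q r ≠ 0) (C : Multiset ℝ) :
    {δ : ℝ | msq3 δ p q r = C}.Finite := by
  have hedge : q 1 - p 1 ≠ 0 ∨ r 1 - q 1 ≠ 0 := by
    by_contra hc
    push_neg at hc
    apply hd
    show (q 0 - p 0) * (r 1 - p 1) - (q 1 - p 1) * (r 0 - p 0) = 0
    linear_combination (q 0 - p 0) * (hc.1 + hc.2) - (r 0 - p 0) * hc.1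
  have main : ∀ x y : Plane, x 1 - y 1 ≠ 0 →
      (∀ δ : ℝ, sqd (shear δ x) (shear δ y) ∈ msq3 δ p q r) →
      {δ : ℝ | msq3 δ p q r = C}.Finite := by
    intro x y hb hmem
    apply Set.Finite.subset (Set.Finite.biUnion C.toFinset.finite_toSet
      (fun c _ => edge_value_finite hb c))
    intro δ hδ
    simp only [Set.mem_setOf_eq] at hδ
    simp only [Set.mem_iUnion, Set.mem_setOf_eq]
    exact ⟨sqd (shear δ x) (shear δ y), by rw [Finset.mem_coe, Multiset.mem_toFinset, ← hδ]; exact hmem δ, rfl⟩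
  rcases hedge with hb | hb
  · exact main q p (by intro h; exact hb (by linarith)) (fun δ => by
      rw [sqd_comm]; exact mem_msq3_1 δ p q r)
  · exact main r q (by intro h; exact hb (by linarith)) (fun δ => by
      rw [sqd_comm]; exact mem_msq3_2 δ p q r)



lemma infinite_or3 {S : Set ℝ} {P Q R : ℝ → Prop} (hS : S.Infinite)
    (h : ∀ δ ∈ S, P δ ∨ Q δ ∨ R δ) :
    {δ | P δ}.Infinite ∨ {δ | Q δ}.Infinite ∨ {δ | R δ}.Infinite := by
  by_contra hc
  push_neg at hc
  obtain ⟨h1, h2, h3⟩ := hc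
  refine hS (((h1.union h2).union h3).subset ?_)
  intro δ hδ
  rcases h δ hδ with hh | hh | hh <;> simp [hh]

lemma edge_match {x y x' y' : Plane}
    (hinf : {δ : ℝ | sqd (shear δ x) (shear δ y) = sqd (shear δ x') (shear δ y')}.Infinite) :
    ∃ ε : ℝ, (ε = 1 ∨ ε = -1) ∧ x 0 - y 0 = ε * (x' 0 - y' 0) ∧ x 1 - y 1 = ε * (x' 1 - y' 1) := by
  have hset : {δ : ℝ | sqd (shear δ x) (shear δ y) = sqd (shear δ x') (shear δ y')} =
      {δ : ℝ | ((x 1 - y 1)^2 - (x' 1 - y' 1)^2) * δ^2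
          + (2*(x 0 - y 0)*(x 1 - y 1) - 2*(x' 0 - y' 0)*(x' 1 - y' 1)) * δ
          + ((x 0 - y 0)^2 + (x 1 - y 1)^2 - ((x' 0 - y' 0)^2 + (x' 1 - y' 1)^2)) = 0} := by
    ext δ
    simp only [Set.mem_setOf_eq, sqd_shear_quad]
    constructor <;> intro h <;> linear_combination h
  rw [hset] at hinf
  obtain ⟨h1, h2, h3⟩ := quad_zero hinf
  have hbb : ((x 1 - y 1) - (x' 1 - y' 1)) * ((x 1 - y 1) + (x' 1 - y' 1)) = 0 := by
    linear_combination h1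
  by_cases hb'0 : x' 1 - y' 1 = 0
  · have hb0 : x 1 - y 1 = 0 := by
      rcases mul_eq_zero.mp hbb with h | h <;> rw [hb'0] at h <;> linarith
    have haa : ((x 0 - y 0) - (x' 0 - y' 0)) * ((x 0 - y 0) + (x' 0 - y' 0)) = 0 := by
      linear_combination h3 - h1
    rcases mul_eq_zero.mp haa with h | h
    · exact ⟨1, Or.inl rfl, by rw [one_mul]; linarith, by rw [one_mul]; linarith⟩
    · exact ⟨-1, Or.inr rfl, by rw [neg_one_mul]; linarith, by rw [neg_one_mul]; linarith⟩
  · rcases mul_eq_zero.mp hbb with h | h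
    · have ha : ((x 0 - y 0) - (x' 0 - y' 0)) * (x' 1 - y' 1) = 0 := by
        linear_combination (1/2) * h2 - (x 0 - y 0) * h
      have haa : x 0 - y 0 = x' 0 - y' 0 := by
        rcases mul_eq_zero.mp ha with h' | h'
        · linarith
        · exact absurd h' hb'0
      exact ⟨1, Or.inl rfl, by rw [one_mul]; exact haa, by rw [one_mul]; linarith⟩
    · have ha : ((x 0 - y 0) + (x' 0 - y' 0)) * (x' 1 - y' 1) = 0 := by
        linear_combination -(1/2) * h2 + (x 0 - y 0) * h
      have haa : x 0 - y 0 = -1 * (x' 0 - y' 0) := by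
        rcases mul_eq_zero.mp ha with h' | h'
        · rw [neg_one_mul]; linarith
        · exact absurd h' hb'0
      exact ⟨-1, Or.inr rfl, haa, by rw [neg_one_mul]; linarith⟩

lemma no_double {A B u1 v1 u2 v2 e1 e2 : ℝ} (h1 : u1 = e1 * A) (h2 : v1 = e1 * B)
    (h3 : u2 = e2 * A) (h4 : v2 = e2 * B) : u1 * v2 - v1 * u2 = 0 := by
  subst h1; subst h2; subst h3; subst h4; ring

lemma sign_force {A1 B1 A2 B2 e1 e2 e3 : ℝ}
    (h1 : (e1 - e3) * A1 + (e2 - e3) * A2 = 0)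
    (h2 : (e1 - e3) * B1 + (e2 - e3) * B2 = 0)
    (hc : A1 * B2 - B1 * A2 ≠ 0) : e1 = e3 ∧ e2 = e3 := by
  have k1 : (e1 - e3) * (A1 * B2 - B1 * A2) = 0 := by linear_combination B2 * h1 - A2 * h2
  have k2 : (e2 - e3) * (A1 * B2 - B1 * A2) = 0 := by linear_combination A1 * h2 - B1 * h1
  constructor
  · have := (mul_eq_zero.mp k1).resolve_right hc; linarith
  · have := (mul_eq_zero.mp k2).resolve_right hc; linarith

def afm (s : ℝ) (t : Plane) : Plane →ᵃ[ℝ] Plane where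
  toFun z := s • z + t
  linear := s • LinearMap.id
  map_vadd' pt v := by
    simp only [vadd_eq_add, smul_add, LinearMap.smul_apply, LinearMap.id_apply]
    abel

lemma transCong_of_image {p q r p' q' r' : Plane} {s : ℝ} (hs : s = 1 ∨ s = -1) (t : Plane)
    (h : (fun z => s • z + t) '' ({p, q, r} : Set Plane) = ({p', q', r'} : Set Plane)) :
    TransCong (convexHull ℝ ({p, q, r} : Set Plane)) (convexHull ℝ ({p', q', r'} : Set Plane)) := by
  refine ⟨s, hs, t, ?_⟩
  have hco : (fun z => s • z + t) = ⇑(afm s t) := rfl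
  rw [hco, AffineMap.image_convexHull, ← hco, h]

set_option maxHeartbeats 3000000 in
lemma sep1 {p q r p' q' r' : Plane} (hd : detv p q r ≠ 0) (hd' : detv p' q' r' ≠ 0)
    (hnc : ¬ TransCong (convexHull ℝ ({p, q, r} : Set Plane)) (convexHull ℝ ({p', q', r'} : Set Plane))) :
    {δ : ℝ | msq3 δ p q r = msq3 δ p' q' r'}.Finite := by
  by_contra hfin
  have hinf : {δ : ℝ | msq3 δ p q r = msq3 δ p' q' r'}.Infinite := hfin
  apply hnc
  have key : ∀ x y : Plane, (∀ δ : ℝ, sqd (shear δ x) (shear δ y) ∈ msq3 δ p q r) →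
      ∃ ε : ℝ, (ε = 1 ∨ ε = -1) ∧
        ((x 0 - y 0 = ε * (p' 0 - q' 0) ∧ x 1 - y 1 = ε * (p' 1 - q' 1)) ∨
         (x 0 - y 0 = ε * (q' 0 - r' 0) ∧ x 1 - y 1 = ε * (q' 1 - r' 1)) ∨
         (x 0 - y 0 = ε * (r' 0 - p' 0) ∧ x 1 - y 1 = ε * (r' 1 - p' 1))) := by
    intro x y hmem
    have hor := infinite_or3
      (P := fun δ => sqd (shear δ x) (shear δ y) = sqd (shear δ p') (shear δ q'))
      (Q := fun δ => sqd (shear δ x) (shear δ y) = sqd (shear δ q') (shear δ r'))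
      (R := fun δ => sqd (shear δ x) (shear δ y) = sqd (shear δ r') (shear δ p'))
      hinf (fun δ hδ => by
        have hm := hmem δ
        rw [Set.mem_setOf_eq] at hδ
        rw [hδ] at hm
        exact mem_msq3_iff.mp hm)
    rcases hor with h | h | h
    · obtain ⟨ε, hε, h1, h2⟩ := edge_match h
      exact ⟨ε, hε, Or.inl ⟨h1, h2⟩⟩
    · obtain ⟨ε, hε, h1, h2⟩ := edge_match h
      exact ⟨ε, hε, Or.inr (Or.inl ⟨h1, h2⟩)⟩
    · obtain ⟨ε, hε, h1, h2⟩ := edge_match h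
      exact ⟨ε, hε, Or.inr (Or.inr ⟨h1, h2⟩)⟩
  obtain ⟨ε1, hε1, m1⟩ := key p q (fun δ => mem_msq3_1 δ p q r)
  obtain ⟨ε2, hε2, m2⟩ := key q r (fun δ => mem_msq3_2 δ p q r)
  obtain ⟨ε3, hε3, m3⟩ := key r p (fun δ => mem_msq3_3 δ p q r)
  rcases m1 with ⟨ha1, hb1⟩ | ⟨ha1, hb1⟩ | ⟨ha1, hb1⟩ <;>
    rcases m2 with ⟨ha2, hb2⟩ | ⟨ha2, hb2⟩ | ⟨ha2, hb2⟩ <;>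
      rcases m3 with ⟨ha3, hb3⟩ | ⟨ha3, hb3⟩ | ⟨ha3, hb3⟩
  · exact absurd (show detv p q r = 0 from by
      unfold detv
      first
        | linear_combination (no_double ha1 hb1 ha2 hb2)
        | linear_combination -(no_double ha1 hb1 ha2 hb2)) hd
  · exact absurd (show detv p q r = 0 from by
      unfold detv
      first
        | linear_combination (no_double ha1 hb1 ha2 hb2)
        | linear_combination -(no_double ha1 hb1 ha2 hb2)) hd
  · exact absurd (show detv p q r = 0 from by
      unfold detv
      first
        | linear_combination (no_double ha1 hb1 ha2 hb2)
        | linear_combination -(no_double ha1 hb1 ha2 hb2)) hd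
  · exact absurd (show detv p q r = 0 from by
      unfold detv
      first
        | linear_combination (no_double ha1 hb1 ha3 hb3)
        | linear_combination -(no_double ha1 hb1 ha3 hb3)) hd
  · exact absurd (show detv p q r = 0 from by
      unfold detv
      first
        | linear_combination (no_double ha2 hb2 ha3 hb3)
        | linear_combination -(no_double ha2 hb2 ha3 hb3)) hd
  · have hcross : (p' 0 - q' 0) * (q' 1 - r' 1) - (p' 1 - q' 1) * (q' 0 - r' 0) ≠ 0 := by
      intro h
      exact hd' (by unfold detv; first | linear_combination h | linear_combination -h)
    obtain ⟨he1, he2⟩ := sign_force (A1 := (p' 0 - q' 0)) (B1 := (p' 1 - q' 1)) (A2 := (q' 0 - r' 0)) (B2 := (q' 1 - r' 1))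
      (e1 := ε1) (e2 := ε2) (e3 := ε3)
      (by linear_combination -ha1-ha2-ha3)
      (by linear_combination -hb1-hb2-hb3) hcross
    rw [he1] at ha1 hb1
    rw [he2] at ha2 hb2
    have hss : ε3 * ε3 = 1 := by rcases hε3 with h | h <;> rw [h] <;> norm_num
    have Ha1 : ε3 * (p 0 - q 0) = (p' 0 - q' 0) := by linear_combination ε3 * ha1 + (p' 0 - q' 0) * hss
    have Hb1 : ε3 * (p 1 - q 1) = (p' 1 - q' 1) := by linear_combination ε3 * hb1 + (p' 1 - q' 1) * hss
    have Ha2 : ε3 * (q 0 - r 0) = (q' 0 - r' 0) := by linear_combination ε3 * ha2 + (q' 0 - r' 0) * hss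
    have Hb2 : ε3 * (q 1 - r 1) = (q' 1 - r' 1) := by linear_combination ε3 * hb2 + (q' 1 - r' 1) * hss
    apply transCong_of_image hε3 (p' - ε3 • p)
    simp only [Set.image_insert_eq, Set.image_singleton]
    have e1 : ε3 • p + (p' - ε3 • p) = p' := plane_ext
      (by simp only [add_apply, smul_apply, sub_apply, neg_apply]; ring)
      (by simp only [add_apply, smul_apply, sub_apply, neg_apply]; ring)
    have e2 : ε3 • q + (p' - ε3 • p) = q' := plane_ext
      (by simp only [add_apply, smul_apply, sub_apply, neg_apply]; linear_combination -Ha1)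
      (by simp only [add_apply, smul_apply, sub_apply, neg_apply]; linear_combination -Hb1)
    have e3 : ε3 • r + (p' - ε3 • p) = r' := plane_ext
      (by simp only [add_apply, smul_apply, sub_apply, neg_apply]; linear_combination -Ha1 - Ha2)
      (by simp only [add_apply, smul_apply, sub_apply, neg_apply]; linear_combination -Hb1 - Hb2)
    rw [e1, e2, e3]
    all_goals
      ext z
      simp only [Set.mem_insert_iff, Set.mem_singleton_iff]
      tauto
  · exact absurd (show detv p q r = 0 from by
      unfold detv
      first
        | linear_combination (no_double ha1 hb1 ha3 hb3)
        | linear_combination -(no_double ha1 hb1 ha3 hb3)) hd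
  · have hcross : (p' 0 - q' 0) * (r' 1 - p' 1) - (p' 1 - q' 1) * (r' 0 - p' 0) ≠ 0 := by
      intro h
      exact hd' (by unfold detv; first | linear_combination h | linear_combination -h)
    obtain ⟨he1, he2⟩ := sign_force (A1 := (p' 0 - q' 0)) (B1 := (p' 1 - q' 1)) (A2 := (r' 0 - p' 0)) (B2 := (r' 1 - p' 1))
      (e1 := ε1) (e2 := ε2) (e3 := ε3)
      (by linear_combination -ha1-ha2-ha3)
      (by linear_combination -hb1-hb2-hb3) hcross
    rw [he1] at ha1 hb1
    rw [he2] at ha2 hb2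
    have hss : ε3 * ε3 = 1 := by rcases hε3 with h | h <;> rw [h] <;> norm_num
    have Ha1 : ε3 * (p 0 - q 0) = (p' 0 - q' 0) := by linear_combination ε3 * ha1 + (p' 0 - q' 0) * hss
    have Hb1 : ε3 * (p 1 - q 1) = (p' 1 - q' 1) := by linear_combination ε3 * hb1 + (p' 1 - q' 1) * hss
    have Ha2 : ε3 * (q 0 - r 0) = (r' 0 - p' 0) := by linear_combination ε3 * ha2 + (r' 0 - p' 0) * hss
    have Hb2 : ε3 * (q 1 - r 1) = (r' 1 - p' 1) := by linear_combination ε3 * hb2 + (r' 1 - p' 1) * hss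
    have hneg : -ε3 = 1 ∨ -ε3 = -1 := by
      rcases hε3 with h | h
      · right; rw [h]
      · left; rw [h]; norm_num
    apply transCong_of_image hneg (p' + ε3 • q)
    simp only [Set.image_insert_eq, Set.image_singleton]
    have e1 : (-ε3) • p + (p' + ε3 • q) = q' := plane_ext
      (by simp only [add_apply, smul_apply, sub_apply, neg_apply]; linear_combination -Ha1)
      (by simp only [add_apply, smul_apply, sub_apply, neg_apply]; linear_combination -Hb1)
    have e2 : (-ε3) • q + (p' + ε3 • q) = p' := plane_ext
      (by simp only [add_apply, smul_apply, sub_apply, neg_apply]; ring)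
      (by simp only [add_apply, smul_apply, sub_apply, neg_apply]; ring)
    have e3 : (-ε3) • r + (p' + ε3 • q) = r' := plane_ext
      (by simp only [add_apply, smul_apply, sub_apply, neg_apply]; linear_combination Ha2)
      (by simp only [add_apply, smul_apply, sub_apply, neg_apply]; linear_combination Hb2)
    rw [e1, e2, e3]
    all_goals
      ext z
      simp only [Set.mem_insert_iff, Set.mem_singleton_iff]
      tauto
  · exact absurd (show detv p q r = 0 from by
      unfold detv
      first
        | linear_combination (no_double ha2 hb2 ha3 hb3)
        | linear_combination -(no_double ha2 hb2 ha3 hb3)) hd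
  · exact absurd (show detv p q r = 0 from by
      unfold detv
      first
        | linear_combination (no_double ha2 hb2 ha3 hb3)
        | linear_combination -(no_double ha2 hb2 ha3 hb3)) hd
  · exact absurd (show detv p q r = 0 from by
      unfold detv
      first
        | linear_combination (no_double ha1 hb1 ha3 hb3)
        | linear_combination -(no_double ha1 hb1 ha3 hb3)) hd
  · have hcross : (q' 0 - r' 0) * (p' 1 - q' 1) - (q' 1 - r' 1) * (p' 0 - q' 0) ≠ 0 := by
      intro h
      exact hd' (by unfold detv; first | linear_combination h | linear_combination -h)
    obtain ⟨he1, he2⟩ := sign_force (A1 := (q' 0 - r' 0)) (B1 := (q' 1 - r' 1)) (A2 := (p' 0 - q' 0)) (B2 := (p' 1 - q' 1))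
      (e1 := ε1) (e2 := ε2) (e3 := ε3)
      (by linear_combination -ha1-ha2-ha3)
      (by linear_combination -hb1-hb2-hb3) hcross
    rw [he1] at ha1 hb1
    rw [he2] at ha2 hb2
    have hss : ε3 * ε3 = 1 := by rcases hε3 with h | h <;> rw [h] <;> norm_num
    have Ha1 : ε3 * (p 0 - q 0) = (q' 0 - r' 0) := by linear_combination ε3 * ha1 + (q' 0 - r' 0) * hss
    have Hb1 : ε3 * (p 1 - q 1) = (q' 1 - r' 1) := by linear_combination ε3 * hb1 + (q' 1 - r' 1) * hss
    have Ha2 : ε3 * (q 0 - r 0) = (p' 0 - q' 0) := by linear_combination ε3 * ha2 + (p' 0 - q' 0) * hss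
    have Hb2 : ε3 * (q 1 - r 1) = (p' 1 - q' 1) := by linear_combination ε3 * hb2 + (p' 1 - q' 1) * hss
    have hneg : -ε3 = 1 ∨ -ε3 = -1 := by
      rcases hε3 with h | h
      · right; rw [h]
      · left; rw [h]; norm_num
    apply transCong_of_image hneg (q' + ε3 • q)
    simp only [Set.image_insert_eq, Set.image_singleton]
    have e1 : (-ε3) • p + (q' + ε3 • q) = r' := plane_ext
      (by simp only [add_apply, smul_apply, sub_apply, neg_apply]; linear_combination -Ha1)
      (by simp only [add_apply, smul_apply, sub_apply, neg_apply]; linear_combination -Hb1)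
    have e2 : (-ε3) • q + (q' + ε3 • q) = q' := plane_ext
      (by simp only [add_apply, smul_apply, sub_apply, neg_apply]; ring)
      (by simp only [add_apply, smul_apply, sub_apply, neg_apply]; ring)
    have e3 : (-ε3) • r + (q' + ε3 • q) = p' := plane_ext
      (by simp only [add_apply, smul_apply, sub_apply, neg_apply]; linear_combination Ha2)
      (by simp only [add_apply, smul_apply, sub_apply, neg_apply]; linear_combination Hb2)
    rw [e1, e2, e3]
    all_goals
      ext z
      simp only [Set.mem_insert_iff, Set.mem_singleton_iff]
      tauto
  · exact absurd (show detv p q r = 0 from by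
      unfold detv
      first
        | linear_combination (no_double ha1 hb1 ha2 hb2)
        | linear_combination -(no_double ha1 hb1 ha2 hb2)) hd
  · exact absurd (show detv p q r = 0 from by
      unfold detv
      first
        | linear_combination (no_double ha1 hb1 ha2 hb2)
        | linear_combination -(no_double ha1 hb1 ha2 hb2)) hd
  · exact absurd (show detv p q r = 0 from by
      unfold detv
      first
        | linear_combination (no_double ha1 hb1 ha2 hb2)
        | linear_combination -(no_double ha1 hb1 ha2 hb2)) hd
  · have hcross : (q' 0 - r' 0) * (r' 1 - p' 1) - (q' 1 - r' 1) * (r' 0 - p' 0) ≠ 0 := by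
      intro h
      exact hd' (by unfold detv; first | linear_combination h | linear_combination -h)
    obtain ⟨he1, he2⟩ := sign_force (A1 := (q' 0 - r' 0)) (B1 := (q' 1 - r' 1)) (A2 := (r' 0 - p' 0)) (B2 := (r' 1 - p' 1))
      (e1 := ε1) (e2 := ε2) (e3 := ε3)
      (by linear_combination -ha1-ha2-ha3)
      (by linear_combination -hb1-hb2-hb3) hcross
    rw [he1] at ha1 hb1
    rw [he2] at ha2 hb2
    have hss : ε3 * ε3 = 1 := by rcases hε3 with h | h <;> rw [h] <;> norm_num
    have Ha1 : ε3 * (p 0 - q 0) = (q' 0 - r' 0) := by linear_combination ε3 * ha1 + (q' 0 - r' 0) * hss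
    have Hb1 : ε3 * (p 1 - q 1) = (q' 1 - r' 1) := by linear_combination ε3 * hb1 + (q' 1 - r' 1) * hss
    have Ha2 : ε3 * (q 0 - r 0) = (r' 0 - p' 0) := by linear_combination ε3 * ha2 + (r' 0 - p' 0) * hss
    have Hb2 : ε3 * (q 1 - r 1) = (r' 1 - p' 1) := by linear_combination ε3 * hb2 + (r' 1 - p' 1) * hss
    apply transCong_of_image hε3 (q' - ε3 • p)
    simp only [Set.image_insert_eq, Set.image_singleton]
    have e1 : ε3 • p + (q' - ε3 • p) = q' := plane_ext
      (by simp only [add_apply, smul_apply, sub_apply, neg_apply]; ring)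
      (by simp only [add_apply, smul_apply, sub_apply, neg_apply]; ring)
    have e2 : ε3 • q + (q' - ε3 • p) = r' := plane_ext
      (by simp only [add_apply, smul_apply, sub_apply, neg_apply]; linear_combination -Ha1)
      (by simp only [add_apply, smul_apply, sub_apply, neg_apply]; linear_combination -Hb1)
    have e3 : ε3 • r + (q' - ε3 • p) = p' := plane_ext
      (by simp only [add_apply, smul_apply, sub_apply, neg_apply]; linear_combination -Ha1 - Ha2)
      (by simp only [add_apply, smul_apply, sub_apply, neg_apply]; linear_combination -Hb1 - Hb2)
    rw [e1, e2, e3]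
    all_goals
      ext z
      simp only [Set.mem_insert_iff, Set.mem_singleton_iff]
      tauto
  · exact absurd (show detv p q r = 0 from by
      unfold detv
      first
        | linear_combination (no_double ha1 hb1 ha3 hb3)
        | linear_combination -(no_double ha1 hb1 ha3 hb3)) hd
  · exact absurd (show detv p q r = 0 from by
      unfold detv
      first
        | linear_combination (no_double ha2 hb2 ha3 hb3)
        | linear_combination -(no_double ha2 hb2 ha3 hb3)) hd
  · exact absurd (show detv p q r = 0 from by
      unfold detv
      first
        | linear_combination (no_double ha2 hb2 ha3 hb3)
        | linear_combination -(no_double ha2 hb2 ha3 hb3)) hd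
  · have hcross : (r' 0 - p' 0) * (p' 1 - q' 1) - (r' 1 - p' 1) * (p' 0 - q' 0) ≠ 0 := by
      intro h
      exact hd' (by unfold detv; first | linear_combination h | linear_combination -h)
    obtain ⟨he1, he2⟩ := sign_force (A1 := (r' 0 - p' 0)) (B1 := (r' 1 - p' 1)) (A2 := (p' 0 - q' 0)) (B2 := (p' 1 - q' 1))
      (e1 := ε1) (e2 := ε2) (e3 := ε3)
      (by linear_combination -ha1-ha2-ha3)
      (by linear_combination -hb1-hb2-hb3) hcross
    rw [he1] at ha1 hb1
    rw [he2] at ha2 hb2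
    have hss : ε3 * ε3 = 1 := by rcases hε3 with h | h <;> rw [h] <;> norm_num
    have Ha1 : ε3 * (p 0 - q 0) = (r' 0 - p' 0) := by linear_combination ε3 * ha1 + (r' 0 - p' 0) * hss
    have Hb1 : ε3 * (p 1 - q 1) = (r' 1 - p' 1) := by linear_combination ε3 * hb1 + (r' 1 - p' 1) * hss
    have Ha2 : ε3 * (q 0 - r 0) = (p' 0 - q' 0) := by linear_combination ε3 * ha2 + (p' 0 - q' 0) * hss
    have Hb2 : ε3 * (q 1 - r 1) = (p' 1 - q' 1) := by linear_combination ε3 * hb2 + (p' 1 - q' 1) * hss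
    apply transCong_of_image hε3 (r' - ε3 • p)
    simp only [Set.image_insert_eq, Set.image_singleton]
    have e1 : ε3 • p + (r' - ε3 • p) = r' := plane_ext
      (by simp only [add_apply, smul_apply, sub_apply, neg_apply]; ring)
      (by simp only [add_apply, smul_apply, sub_apply, neg_apply]; ring)
    have e2 : ε3 • q + (r' - ε3 • p) = p' := plane_ext
      (by simp only [add_apply, smul_apply, sub_apply, neg_apply]; linear_combination -Ha1)
      (by simp only [add_apply, smul_apply, sub_apply, neg_apply]; linear_combination -Hb1)
    have e3 : ε3 • r + (r' - ε3 • p) = q' := plane_ext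
      (by simp only [add_apply, smul_apply, sub_apply, neg_apply]; linear_combination -Ha1 - Ha2)
      (by simp only [add_apply, smul_apply, sub_apply, neg_apply]; linear_combination -Hb1 - Hb2)
    rw [e1, e2, e3]
    all_goals
      ext z
      simp only [Set.mem_insert_iff, Set.mem_singleton_iff]
      tauto
  · exact absurd (show detv p q r = 0 from by
      unfold detv
      first
        | linear_combination (no_double ha1 hb1 ha3 hb3)
        | linear_combination -(no_double ha1 hb1 ha3 hb3)) hd
  · have hcross : (r' 0 - p' 0) * (q' 1 - r' 1) - (r' 1 - p' 1) * (q' 0 - r' 0) ≠ 0 := by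
      intro h
      exact hd' (by unfold detv; first | linear_combination h | linear_combination -h)
    obtain ⟨he1, he2⟩ := sign_force (A1 := (r' 0 - p' 0)) (B1 := (r' 1 - p' 1)) (A2 := (q' 0 - r' 0)) (B2 := (q' 1 - r' 1))
      (e1 := ε1) (e2 := ε2) (e3 := ε3)
      (by linear_combination -ha1-ha2-ha3)
      (by linear_combination -hb1-hb2-hb3) hcross
    rw [he1] at ha1 hb1
    rw [he2] at ha2 hb2
    have hss : ε3 * ε3 = 1 := by rcases hε3 with h | h <;> rw [h] <;> norm_num
    have Ha1 : ε3 * (p 0 - q 0) = (r' 0 - p' 0) := by linear_combination ε3 * ha1 + (r' 0 - p' 0) * hss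
    have Hb1 : ε3 * (p 1 - q 1) = (r' 1 - p' 1) := by linear_combination ε3 * hb1 + (r' 1 - p' 1) * hss
    have Ha2 : ε3 * (q 0 - r 0) = (q' 0 - r' 0) := by linear_combination ε3 * ha2 + (q' 0 - r' 0) * hss
    have Hb2 : ε3 * (q 1 - r 1) = (q' 1 - r' 1) := by linear_combination ε3 * hb2 + (q' 1 - r' 1) * hss
    have hneg : -ε3 = 1 ∨ -ε3 = -1 := by
      rcases hε3 with h | h
      · right; rw [h]
      · left; rw [h]; norm_num
    apply transCong_of_image hneg (p' + ε3 • p)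
    simp only [Set.image_insert_eq, Set.image_singleton]
    have e1 : (-ε3) • p + (p' + ε3 • p) = p' := plane_ext
      (by simp only [add_apply, smul_apply, sub_apply, neg_apply]; ring)
      (by simp only [add_apply, smul_apply, sub_apply, neg_apply]; ring)
    have e2 : (-ε3) • q + (p' + ε3 • p) = r' := plane_ext
      (by simp only [add_apply, smul_apply, sub_apply, neg_apply]; linear_combination Ha1)
      (by simp only [add_apply, smul_apply, sub_apply, neg_apply]; linear_combination Hb1)
    have e3 : (-ε3) • r + (p' + ε3 • p) = q' := plane_ext
      (by simp only [add_apply, smul_apply, sub_apply, neg_apply]; linear_combination Ha1 + Ha2)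
      (by simp only [add_apply, smul_apply, sub_apply, neg_apply]; linear_combination Hb1 + Hb2)
    rw [e1, e2, e3]
    all_goals
      ext z
      simp only [Set.mem_insert_iff, Set.mem_singleton_iff]
      tauto
  · exact absurd (show detv p q r = 0 from by
      unfold detv
      first
        | linear_combination (no_double ha2 hb2 ha3 hb3)
        | linear_combination -(no_double ha2 hb2 ha3 hb3)) hd
  · exact absurd (show detv p q r = 0 from by
      unfold detv
      first
        | linear_combination (no_double ha1 hb1 ha3 hb3)
        | linear_combination -(no_double ha1 hb1 ha3 hb3)) hd
  · exact absurd (show detv p q r = 0 from by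
      unfold detv
      first
        | linear_combination (no_double ha1 hb1 ha2 hb2)
        | linear_combination -(no_double ha1 hb1 ha2 hb2)) hd
  · exact absurd (show detv p q r = 0 from by
      unfold detv
      first
        | linear_combination (no_double ha1 hb1 ha2 hb2)
        | linear_combination -(no_double ha1 hb1 ha2 hb2)) hd
  · exact absurd (show detv p q r = 0 from by
      unfold detv
      first
        | linear_combination (no_double ha1 hb1 ha2 hb2)
        | linear_combination -(no_double ha1 hb1 ha2 hb2)) hd


lemma congruent_symm {A B : Set Plane} (h : PlaneCongruent A B) : PlaneCongruent B A := by
  obtain ⟨f, hf⟩ := h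
  refine ⟨f.symm, ?_⟩
  rw [← hf, ← Set.image_comp]
  have hid : (⇑f.symm ∘ ⇑f) = id := by funext x; simp
  rw [hid, Set.image_id]

lemma ioo_diff_nonempty {s : Set ℝ} (hs : s.Countable) :
    (Set.Ioo (-1:ℝ) 1 \ s).Nonempty := by
  by_contra h
  rw [Set.not_nonempty_iff_eq_empty, Set.diff_eq_empty] at h
  have h1 := measure_mono (μ := volume) h
  rw [hs.measure_zero, Real.volume_Ioo] at h1
  simp only [nonpos_iff_eq_zero, ENNReal.ofReal_eq_zero] at h1
  norm_num at h1

lemma exists_seq_avoid (A : Set ℝ) (hA : A.Countable) (F : ℝ → Set ℝ)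
    (hF : ∀ c, (F c).Countable) :
    ∃ δ : ℕ → ℝ, ∀ n, δ n ∈ Set.Ioo (-1:ℝ) 1 \ (A ∪ ⋃ m ∈ Set.Iio n, F (δ m)) := by
  classical
  have hne : ∀ v : ℕ → ℝ, ∀ n : ℕ,
      (Set.Ioo (-1:ℝ) 1 \ (A ∪ ⋃ m ∈ Set.Iio n, F (v m))).Nonempty := by
    intro v n
    apply ioo_diff_nonempty
    exact hA.union (Set.Countable.biUnion (Set.to_countable _) (fun m _ => hF (v m)))
  choose pick hpick using hne
  set g : ℕ → ℕ → ℝ := fun n => Nat.rec (motive := fun _ => ℕ → ℝ) (fun _ => 0)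
    (fun n v k => if k = n then pick v n else v k) n with hg
  have hgs : ∀ n k, g (n+1) k = if k = n then pick (g n) n else g n k := fun n k => rfl
  have stable : ∀ n k, k < n → g n k = g (k+1) k := by
    intro n
    induction n with
    | zero => intro k hk; omega
    | succ n ih =>
      intro k hk
      rcases Nat.lt_succ_iff_lt_or_eq.mp hk with h | h
      · rw [hgs n k, if_neg (by omega)]
        exact ih k h
      · subst h; rfl
  refine ⟨fun n => g (n+1) n, fun n => ?_⟩
  show g (n+1) n ∈ Set.Ioo (-1:ℝ) 1 \ (A ∪ ⋃ m ∈ Set.Iio n, F (g (m+1) m))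
  have hval : g (n+1) n = pick (g n) n := by rw [hgs, if_pos rfl]
  have hp := hpick (g n) n
  have hun : (⋃ m ∈ Set.Iio n, F (g n m)) = ⋃ m ∈ Set.Iio n, F (g (m+1) m) :=
    Set.iUnion₂_congr fun m hm => by rw [stable n m hm]
  rw [hun] at hp
  rw [hval]
  exact hp

end St18

/-- Given a countable family of triangles, pairwise not related by `≃` (translation or
point reflection), there are shear parameters `δₙ ∈ (−1,1)` such that no two distinct
triangles within one sheared family are congruent, and no triangle of one sheared
family is congruent to a triangle of another. -/
theorem statement18 (𝒯 : Set (Set Plane)) (hc : 𝒯.Countable)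
    (htri : ∀ T ∈ 𝒯, IsTriangle T)
    (hpair : ∀ T ∈ 𝒯, ∀ T' ∈ 𝒯, T ≠ T' → ¬ TransCong T T') :
    ∃ δ : ℕ → ℝ,
      (∀ n : ℕ, |δ n| < 1) ∧
      (∀ n : ℕ, ∀ T ∈ 𝒯, ∀ T' ∈ 𝒯, T ≠ T' →
        ¬ PlaneCongruent (shear (δ n) '' T) (shear (δ n) '' T')) ∧
      (∀ n n' : ℕ, n ≠ n' → ∀ T ∈ 𝒯, ∀ T' ∈ 𝒯,
        ¬ PlaneCongruent (shear (δ n) '' T) (shear (δ n') '' T')) := by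
  classical
  simp only [IsTriangle] at htri
  choose! P Q R hind hTeq using htri
  have hdet : ∀ T ∈ 𝒯, St18.detv (P T) (Q T) (R T) ≠ 0 :=
    fun T hT => St18.detv_ne_of_affineIndependent (hind T hT)
  set A : Set ℝ := ⋃ T ∈ 𝒯, ⋃ T' ∈ 𝒯,
    {δ : ℝ | T ≠ T' ∧ St18.msq3 δ (P T) (Q T) (R T) = St18.msq3 δ (P T') (Q T') (R T')} with hA
  set F : ℝ → Set ℝ := fun c => ⋃ T ∈ 𝒯, ⋃ T' ∈ 𝒯,
    {δ : ℝ | St18.msq3 δ (P T) (Q T) (R T) = St18.msq3 c (P T') (Q T') (R T')} with hF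
  have hAc : A.Countable := by
    refine Set.Countable.biUnion hc fun T hT => Set.Countable.biUnion hc fun T' hT' => ?_
    by_cases hTT : T = T'
    · have : {δ : ℝ | T ≠ T' ∧ St18.msq3 δ (P T) (Q T) (R T)
          = St18.msq3 δ (P T') (Q T') (R T')} = ∅ := by
        ext δ; simp [hTT]
      rw [this]; exact Set.countable_empty
    · refine Set.Countable.mono (fun δ hδ => hδ.2) ?_
      refine (St18.sep1 (hdet T hT) (hdet T' hT') ?_).countable
      rw [← hTeq T hT, ← hTeq T' hT']
      exact hpair T hT T' hT' hTT
  have hFc : ∀ c, (F c).Countable := by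
    intro c
    refine Set.Countable.biUnion hc fun T hT => Set.Countable.biUnion hc fun T' hT' => ?_
    exact (St18.sep2 (hdet T hT) _).countable
  obtain ⟨δ, hδ⟩ := St18.exists_seq_avoid A hAc F hFc
  refine ⟨δ, ?_, ?_, ?_⟩
  · intro n
    have h1 := (hδ n).1
    rw [Set.mem_Ioo] at h1
    rw [abs_lt]
    exact h1
  · intro n T hT T' hT' hne hcong
    have hmeq : St18.msq3 (δ n) (P T) (Q T) (R T) = St18.msq3 (δ n) (P T') (Q T') (R T') := by
      apply St18.cong_shear_msq3 (hdet T hT) (hdet T' hT')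
      rw [← hTeq T hT, ← hTeq T' hT']
      exact hcong
    have hmem : δ n ∈ A := by
      rw [hA]
      simp only [Set.mem_iUnion, Set.mem_setOf_eq]
      exact ⟨T, hT, T', hT', hne, hmeq⟩
    exact (hδ n).2 (Set.mem_union_left _ hmem)
  · intro n n' hnn T hT T' hT' hcong
    rcases Nat.lt_or_ge n' n with hlt | hge
    · have hmeq : St18.msq3 (δ n) (P T) (Q T) (R T) = St18.msq3 (δ n') (P T') (Q T') (R T') := by
        apply St18.cong_shear_msq3 (hdet T hT) (hdet T' hT')
        rw [← hTeq T hT, ← hTeq T' hT']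
        exact hcong
      have hmem : δ n ∈ ⋃ m ∈ Set.Iio n, F (δ m) := by
        refine Set.mem_biUnion hlt ?_
        rw [hF]
        simp only [Set.mem_iUnion, Set.mem_setOf_eq]
        exact ⟨T, hT, T', hT', hmeq⟩
      exact (hδ n).2 (Set.mem_union_right _ hmem)
    · have hlt : n < n' := by omega
      have hmeq : St18.msq3 (δ n') (P T') (Q T') (R T') = St18.msq3 (δ n) (P T) (Q T) (R T) := by
        apply St18.cong_shear_msq3 (hdet T' hT') (hdet T hT)
        rw [← hTeq T hT, ← hTeq T' hT']
        exact St18.congruent_symm hcong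
      have hmem : δ n' ∈ ⋃ m ∈ Set.Iio n', F (δ m) := by
        refine Set.mem_biUnion hlt ?_
        rw [hF]
        simp only [Set.mem_iUnion, Set.mem_setOf_eq]
        exact ⟨T', hT', T, hT, hmeq⟩
      exact (hδ n').2 (Set.mem_union_right _ hmem)
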